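/- arXiv:1605.05846 — 7 statements merged into one kernel-verified Lean document; each statement's English description precedes it below -/
import Mathlib

section
/- For any even integer n ≥ 2 and nonnegative integers a, b, c, d with a + b + c + d = n, define y as follows: y = 4(c+d) + 2(c+d)(1-c-d) if a+c = b+d; y = 4c + 2(c+d)(1-c-d) if a+c = b+d+2; y = 4d + 2(c+d)(1-c-d) if a+c = b+d-2; and y = 4 + 2(c+d)(1-c-d) otherwise. Then y ≤ 4. -/
/-! With `s = c + d`, every case is at most `4 * s + 2 * s * (1 - s)` or `4 + 2 * s * (1 - s)`,
because `c, d ≤ s`. Both are at most `4`: `2 * (s - 1) * (s - 2) ≥ 0` and `s * (s - 1) ≥ 0`,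
as no integer lies strictly between two consecutive integers. -/

theorem Int.sub_mul_sub_add_one_nonneg (s k : ℤ) : 0 ≤ (s - k) * (s - (k + 1)) := by
  rcases le_or_gt s k with h | h
  · nlinarith
  · nlinarith [Int.add_one_le_iff.mpr h]

theorem stmt0_general (a b c d : ℕ) :
    (if (a : ℤ) + c = (b : ℤ) + d then
        4 * ((c : ℤ) + d) + 2 * ((c : ℤ) + d) * (1 - (c : ℤ) - d)
      else if (a : ℤ) + c = (b : ℤ) + d + 2 then
        4 * (c : ℤ) + 2 * ((c : ℤ) + d) * (1 - (c : ℤ) - d)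
      else if (a : ℤ) + c = (b : ℤ) + d - 2 then
        4 * (d : ℤ) + 2 * ((c : ℤ) + d) * (1 - (c : ℤ) - d)
      else
        4 + 2 * ((c : ℤ) + d) * (1 - (c : ℤ) - d)) ≤ 4 := by
  have hc : (0 : ℤ) ≤ c := Int.natCast_nonneg c
  have hd : (0 : ℤ) ≤ d := Int.natCast_nonneg d
  have h₀ := Int.sub_mul_sub_add_one_nonneg (c + d) 0
  have h₁ := Int.sub_mul_sub_add_one_nonneg (c + d) 1
  split_ifs <;> linarith

/-- For even `n ≥ 2` and naturals `a+b+c+d = n`, the case-defined quantity `y`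
is at most 4. -/
theorem stmt0 (n a b c d : ℕ) (hn : 2 ≤ n) (hev : Even n)
    (hsum : a + b + c + d = n) :
    (if (a : ℤ) + c = (b : ℤ) + d then
        4 * ((c : ℤ) + d) + 2 * ((c : ℤ) + d) * (1 - (c : ℤ) - d)
      else if (a : ℤ) + c = (b : ℤ) + d + 2 then
        4 * (c : ℤ) + 2 * ((c : ℤ) + d) * (1 - (c : ℤ) - d)
      else if (a : ℤ) + c = (b : ℤ) + d - 2 then
        4 * (d : ℤ) + 2 * ((c : ℤ) + d) * (1 - (c : ℤ) - d)
      else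
        4 + 2 * ((c : ℤ) + d) * (1 - (c : ℤ) - d)) ≤ 4 :=
  stmt0_general a b c d
end

section
/- For any N-qubit quantum state ρ that is invariant under every permutation of its N = 2n subsystems, and any choice of two binary-outcome POVMs {M^{(l)}_{a|1}}, {M^{(l)}_{a|2}} for each of the n parties, the joint probability distribution P(a_1,...,a_n | j_1,...,j_n) = Tr(ρ_red · M^{(1)}_{a_1|j_1} ⊗ ... ⊗ M^{(n)}_{a_n|j_n}), where ρ_red is the reduced state of ρ on the first n subsystems, can equivalently be obtained by measuring commuting observables: namely, distributing the qudit pairs (l, l+n) of ρ to party l and having party l measure setting 1 on qudit l and setting 2 on qudit l+n. -/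
open Matrix
open scoped ComplexOrder

/-- Tensor product of one-qudit operators as a matrix on `Fin m → Fin d`. -/
def tensOp {m d : ℕ} (M : Fin m → Matrix (Fin d) (Fin d) ℂ) :
    Matrix (Fin m → Fin d) (Fin m → Fin d) ℂ :=
  Matrix.of fun x y => ∏ l, M l (x l) (y l)

/-!
Let `σ` be the permutation of the `2n` qudits that exchanges `l` and `l + n` exactly for the
parties `l` with `j l = 1`. Relabelling the qudits by `σ` turns the product observable on the
right into `M l (j l) (a l)` on qudit `l` and the identity on the last `n` qudits, and leaves
`ρ` unchanged by permutation invariance. The expectation of `A ⊗ 1` in `ρ` is the expectation of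
`A` in the partial trace of `ρ` over the last `n` qudits.
-/

lemma Matrix.trace_mul_eq_sum_sum {ι R : Type*} [Fintype ι] [NonUnitalNonAssocSemiring R]
    (A B : Matrix ι ι R) : (A * B).trace = ∑ x, ∑ y, A x y * B y x := by
  simp only [trace, diag, mul_apply]

section tensOp

variable {d : ℕ}

lemma tensOp_const_one (m : ℕ) :
    tensOp (fun _ : Fin m => (1 : Matrix (Fin d) (Fin d) ℂ)) = 1 := by
  ext x y
  simp [tensOp, one_apply, Fintype.prod_boole, funext_iff]

lemma tensOp_addCases_append {m k : ℕ} (A : Fin m → Matrix (Fin d) (Fin d) ℂ)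
    (B : Fin k → Matrix (Fin d) (Fin d) ℂ) (x y : Fin m → Fin d) (z w : Fin k → Fin d) :
    tensOp (Fin.addCases A B) (Fin.append x z) (Fin.append y w) = tensOp A x y * tensOp B z w := by
  simp [tensOp, Fin.prod_univ_add]

lemma trace_mul_tensOp_comp_perm {m : ℕ} (ρ : Matrix (Fin m → Fin d) (Fin m → Fin d) ℂ)
    (σ : Equiv.Perm (Fin m)) (hσ : ∀ x y, ρ (x ∘ σ) (y ∘ σ) = ρ x y)
    (N : Fin m → Matrix (Fin d) (Fin d) ℂ) :
    (ρ * tensOp (N ∘ σ)).trace = (ρ * tensOp N).trace := by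
  simp only [trace_mul_eq_sum_sum]
  symm
  refine Fintype.sum_equiv (σ.symm.arrowCongr (Equiv.refl _)) _ _ fun x =>
    Fintype.sum_equiv (σ.symm.arrowCongr (Equiv.refl _)) _ _ fun y => ?_
  change _ = ρ (x ∘ σ) (y ∘ σ) * ∏ l, N (σ l) (y (σ l)) (x (σ l))
  rw [hσ, Equiv.prod_comp σ fun u => N u (y u) (x u)]
  rfl

def ptraceRight {m k : ℕ} (ρ : Matrix (Fin (m + k) → Fin d) (Fin (m + k) → Fin d) ℂ) :
    Matrix (Fin m → Fin d) (Fin m → Fin d) ℂ :=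
  of fun x y => ∑ z, ρ (Fin.append x z) (Fin.append y z)

lemma trace_ptraceRight_mul_tensOp {m k : ℕ}
    (ρ : Matrix (Fin (m + k) → Fin d) (Fin (m + k) → Fin d) ℂ)
    (A : Fin m → Matrix (Fin d) (Fin d) ℂ) :
    (ptraceRight ρ * tensOp A).trace =
      (ρ * tensOp (Fin.addCases A fun _ => (1 : Matrix (Fin d) (Fin d) ℂ))).trace := by
  simp only [trace_mul_eq_sum_sum, ptraceRight, of_apply, Finset.sum_mul]
  rw [← (Fin.appendEquiv m k).sum_comp, Fintype.sum_prod_type]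
  refine Fintype.sum_congr _ _ fun x => Finset.sum_comm.trans (Fintype.sum_congr _ _ fun z => ?_)
  rw [← (Fin.appendEquiv m k).sum_comp, Fintype.sum_prod_type]
  refine Fintype.sum_congr _ _ fun y => ?_
  simp only [Fin.appendEquiv, Equiv.coe_fn_mk, tensOp_addCases_append, tensOp_const_one, one_apply,
    mul_ite, mul_one, mul_zero, Finset.sum_ite_eq', Finset.mem_univ, if_true]

end tensOp

def pairSwap {n : ℕ} (p : Fin n → Prop) [DecidablePred p] : Fin (n + n) → Fin (n + n) :=
  Fin.addCases (fun l => if p l then Fin.natAdd n l else Fin.castAdd n l)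
    (fun l => if p l then Fin.castAdd n l else Fin.natAdd n l)

section pairSwap

variable {n : ℕ} (p : Fin n → Prop) [DecidablePred p]

lemma pairSwap_castAdd (l : Fin n) :
    pairSwap p (Fin.castAdd n l) = if p l then Fin.natAdd n l else Fin.castAdd n l :=
  Fin.addCases_left l

lemma pairSwap_natAdd (l : Fin n) :
    pairSwap p (Fin.natAdd n l) = if p l then Fin.castAdd n l else Fin.natAdd n l :=
  Fin.addCases_right l

lemma pairSwap_involutive : Function.Involutive (pairSwap p) := by
  intro u
  refine Fin.addCases (fun l => ?_) (fun l => ?_) u <;> by_cases h : p l <;>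
    simp only [pairSwap_castAdd, pairSwap_natAdd, h, ↓reduceIte]

lemma addCases_comp_pairSwap {α : Type*} (f g : Fin n → α) :
    Fin.addCases (motive := fun _ => α) f g ∘ pairSwap p =
      Fin.addCases (fun l => if p l then g l else f l) (fun l => if p l then f l else g l) := by
  funext u
  refine Fin.addCases (fun l => ?_) (fun l => ?_) u <;> by_cases h : p l <;>
    simp only [Function.comp_apply, pairSwap_castAdd, pairSwap_natAdd, h, ↓reduceIte,
      Fin.addCases_left, Fin.addCases_right]

end pairSwap

theorem stmt3_general (n d : ℕ)
    (ρ : Matrix (Fin (n + n) → Fin d) (Fin (n + n) → Fin d) ℂ)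
    (hperm : ∀ σ : Equiv.Perm (Fin (n + n)), ∀ x y, ρ (x ∘ σ) (y ∘ σ) = ρ x y)
    (M : Fin n → Fin 2 → Fin 2 → Matrix (Fin d) (Fin d) ℂ)
    (a : Fin n → Fin 2) (j : Fin n → Fin 2) :
    ((Matrix.of fun x y : Fin n → Fin d =>
        ∑ z : Fin n → Fin d, ρ (Fin.append x z) (Fin.append y z)) *
      tensOp (fun l => M l (j l) (a l))).trace
    = (ρ * tensOp (fun u : Fin (n + n) =>
        Fin.addCases
          (fun l : Fin n => if j l = 0 then M l 0 (a l) else 1)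
          (fun l : Fin n => if j l = 1 then M l 1 (a l) else 1) u)).trace := by
  let σ := (pairSwap_involutive fun l => j l = 1).toPerm
  have hσ : (fun u : Fin (n + n) =>
        Fin.addCases
          (fun l : Fin n => if j l = 0 then M l 0 (a l) else 1)
          (fun l : Fin n => if j l = 1 then M l 1 (a l) else 1) u) ∘ σ =
      Fin.addCases (fun l => M l (j l) (a l)) fun _ => 1 := by
    rw [Function.Involutive.coe_toPerm, addCases_comp_pairSwap]
    funext u
    congr 1 <;> funext l <;> generalize j l = b <;> fin_cases b <;> rfl
  rw [← trace_mul_tensOp_comp_perm ρ σ (hperm σ), hσ, ← trace_ptraceRight_mul_tensOp]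
  rfl

/-- For a permutationally invariant state `ρ` on `2n` qudits, the joint probability
distribution obtained by measuring two-setting binary-outcome POVMs on the `n`-qudit
reduced state equals the distribution obtained by giving party `l` the qudit pair
`(l, l+n)` and measuring setting `0` on qudit `l` and setting `1` on qudit `l+n`
(commuting measurements). -/
theorem stmt3 (n d : ℕ)
    (ρ : Matrix (Fin (n + n) → Fin d) (Fin (n + n) → Fin d) ℂ)
    (hρ : ρ.PosSemidef) (htr : ρ.trace = 1)
    (hperm : ∀ σ : Equiv.Perm (Fin (n + n)), ∀ x y, ρ (x ∘ σ) (y ∘ σ) = ρ x y)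
    (M : Fin n → Fin 2 → Fin 2 → Matrix (Fin d) (Fin d) ℂ)
    (hpos : ∀ l j a, (M l j a).PosSemidef)
    (hsum : ∀ l j, M l j 0 + M l j 1 = 1)
    (a : Fin n → Fin 2) (j : Fin n → Fin 2) :
    ((Matrix.of fun x y : Fin n → Fin d =>
        ∑ z : Fin n → Fin d, ρ (Fin.append x z) (Fin.append y z)) *
      tensOp (fun l => M l (j l) (a l))).trace
    = (ρ * tensOp (fun u : Fin (n + n) =>
        Fin.addCases
          (fun l : Fin n => if j l = 0 then M l 0 (a l) else 1)
          (fun l : Fin n => if j l = 1 then M l 1 (a l) else 1) u)).trace :=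
  stmt3_general n d ρ hperm M a j
end

section
/- The two-qubit reduced state of the N-qubit W state (obtained by tracing out N-2 qubits) equals (2/N)|ψ^+⟩⟨ψ^+| + (1 - 2/N)|00⟩⟨00|, where |ψ^+⟩ = (|01⟩ + |10⟩)/√2, and this state is entangled for every N ≥ 2. -/
open Matrix
open scoped ComplexOrder

/-- The `n`-qubit W state vector. -/
noncomputable def Wvec (n : ℕ) : (Fin n → Fin 2) → ℂ := fun x =>
  if (Finset.univ.filter fun i => x i = 1).card = 1 then ((Real.sqrt n)⁻¹ : ℝ) else 0

/-- The outer product `|v⟩⟨v|`. -/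
def outer {ι : Type*} (v : ι → ℂ) : Matrix ι ι ℂ :=
  Matrix.of fun x y => v x * star (v y)

/-- The two-qubit Bell state `|ψ⁺⟩ = (|01⟩+|10⟩)/√2`. -/
noncomputable def psiPlus : Fin 2 × Fin 2 → ℂ := fun a =>
  if a.1 ≠ a.2 then ((Real.sqrt 2)⁻¹ : ℝ) else 0

/-- The two-qubit vacuum `|00⟩`. -/
def vac2 : Fin 2 × Fin 2 → ℂ := fun a => if a = (0, 0) then 1 else 0

/-- Kronecker product of two one-qubit matrices. -/
def kron2 (A B : Matrix (Fin 2) (Fin 2) ℂ) :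
    Matrix (Fin 2 × Fin 2) (Fin 2 × Fin 2) ℂ :=
  Matrix.of fun p q => A p.1 q.1 * B p.2 q.2

/-!
The amplitude of a basis string in `|W_N⟩` depends only on its Hamming weight, so the entry
`⟨a|ρ|b⟩` of the two-qubit marginal is `1/N` times the number of strings `z` of the traced-out
qubits with `|a| + |z| = 1 = |b| + |z|`: there are `N - 2` of them when `a = b = 00`, one when
`|a| = |b| = 1`, and none otherwise.

Entanglement follows from the Peres–Horodecki criterion: the partial transpose of a separable
state is a convex combination of matrices `A ⊗ Bᵀ` with `A, B ⪰ 0`, hence positive semidefinite,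
whereas the principal minor of the partial transpose of `ρ` on `|00⟩, |11⟩` equals `-1/N²`.
-/

open Finset

section Hamming

theorem fin_two_ne_zero_iff (a : Fin 2) : a ≠ 0 ↔ a = 1 :=
  ⟨Fin.eq_one_of_ne_zero a, fun h => h ▸ Fin.zero_lt_one.ne'⟩

theorem hammingNorm_comp_equiv {ι κ β : Type*} [Fintype ι] [Fintype κ] [Zero β] [DecidableEq β]
    (e : ι ≃ κ) (x : κ → β) : hammingNorm (x ∘ e) = hammingNorm x :=
  card_equiv e (by simp)

theorem hammingNorm_sumElim {ι κ β : Type*} [Fintype ι] [Fintype κ] [Zero β] [DecidableEq β]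
    (x : ι → β) (y : κ → β) : hammingNorm (Sum.elim x y) = hammingNorm x + hammingNorm y := by
  simp only [hammingNorm, card_filter, Fintype.sum_sum_type, Sum.elim_inl, Sum.elim_inr]
  rfl

variable (ι : Type*) [Fintype ι] [DecidableEq ι]

theorem card_hammingNorm_eq_zero (β : Type*) [Fintype β] [Zero β] [DecidableEq β] :
    #{z : ι → β | hammingNorm z = 0} = 1 := by
  simp only [hammingNorm_eq_zero, filter_eq', mem_univ, if_true, card_singleton]

variable {ι} in
theorem hammingNorm_eq_one_iff_fin_two {z : ι → Fin 2} :
    hammingNorm z = 1 ↔ ∃ j, Pi.single j 1 = z := by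
  simp only [hammingNorm, card_eq_one, Finset.ext_iff, mem_filter, mem_univ, true_and,
    mem_singleton, funext_iff]
  refine exists_congr fun j => forall_congr' fun i => ?_
  obtain rfl | h := eq_or_ne i j
  · simp [eq_comm, fin_two_ne_zero_iff]
  · simp [h, eq_comm]

theorem card_hammingNorm_eq_one_fin_two :
    #{z : ι → Fin 2 | hammingNorm z = 1} = Fintype.card ι := by
  have hinj : Function.Injective fun j : ι => (Pi.single j 1 : ι → Fin 2) := fun j j' h => by
    simpa [Pi.single_apply] using congrFun h j
  have : ({z : ι → Fin 2 | hammingNorm z = 1} : Finset _) = univ.map ⟨_, hinj⟩ := by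
    ext z
    simp [hammingNorm_eq_one_iff_fin_two]
  rw [this, card_map, card_univ]

theorem card_hammingNorm_add_eq_one_and (k l : ℕ) :
    #{z : ι → Fin 2 | k + hammingNorm z = 1 ∧ l + hammingNorm z = 1} =
      if k = 0 ∧ l = 0 then Fintype.card ι else if k = 1 ∧ l = 1 then 1 else 0 := by
  split_ifs with h₀ h₁
  · obtain ⟨rfl, rfl⟩ := h₀
    simpa using card_hammingNorm_eq_one_fin_two ι
  · obtain ⟨rfl, rfl⟩ := h₁
    simpa using card_hammingNorm_eq_zero ι (Fin 2)
  · rw [card_eq_zero, filter_eq_empty_iff]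
    omega

end Hamming

theorem Wvec_eq_ite (n : ℕ) (x : Fin n → Fin 2) :
    Wvec n x = if hammingNorm x = 1 then (((Real.sqrt n)⁻¹ : ℝ) : ℂ) else 0 := by
  simp only [Wvec, hammingNorm, fin_two_ne_zero_iff]

theorem psiPlus_eq_ite (a : Fin 2 × Fin 2) :
    psiPlus a = if hammingNorm ![a.1, a.2] = 1 then (((Real.sqrt 2)⁻¹ : ℝ) : ℂ) else 0 := by
  obtain ⟨a₁, a₂⟩ := a
  fin_cases a₁ <;> fin_cases a₂ <;> simp [psiPlus, hammingNorm, card_filter, Fin.sum_univ_two]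

theorem vac2_eq_ite (a : Fin 2 × Fin 2) :
    vac2 a = if hammingNorm ![a.1, a.2] = 0 then 1 else 0 := by
  obtain ⟨a₁, a₂⟩ := a
  fin_cases a₁ <;> fin_cases a₂ <;> simp [vac2, hammingNorm, card_filter, Fin.sum_univ_two]

theorem sum_Wvec_mul_star_Wvec {α β : Type*} [Fintype α] [Fintype β] [DecidableEq β] {N : ℕ}
    (e : α ⊕ β ≃ Fin N) (a b : α → Fin 2) :
    ∑ z : β → Fin 2, Wvec N (fun i => Sum.elim a z (e.symm i)) *
        star (Wvec N (fun i => Sum.elim b z (e.symm i))) =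
      #{z : β → Fin 2 | hammingNorm a + hammingNorm z = 1 ∧ hammingNorm b + hammingNorm z = 1}
        / N := by
  have hnorm (x : α → Fin 2) (z : β → Fin 2) :
      hammingNorm (fun i => Sum.elim x z (e.symm i)) = hammingNorm x + hammingNorm z := by
    rw [← hammingNorm_sumElim x z, ← hammingNorm_comp_equiv e.symm]
    rfl
  have hsq : (((Real.sqrt N)⁻¹ : ℝ) : ℂ) * star (((Real.sqrt N)⁻¹ : ℝ) : ℂ) = (N : ℂ)⁻¹ := by
    rw [Complex.star_def, Complex.conj_ofReal, ← Complex.ofReal_mul, ← mul_inv,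
      Real.mul_self_sqrt N.cast_nonneg, Complex.ofReal_inv, Complex.ofReal_natCast]
  simp only [Wvec_eq_ite, hnorm, apply_ite star, star_zero, mul_ite, ite_mul, zero_mul, mul_zero,
    hsq, ← ite_and]
  rw [sum_ite, sum_const_zero, add_zero, sum_const, nsmul_eq_mul, div_eq_mul_inv]
  simp_rw [and_comm (a := hammingNorm b + _ = 1)]

noncomputable def wPairState (N : ℕ) : Matrix (Fin 2 × Fin 2) (Fin 2 × Fin 2) ℂ :=
  ((2 : ℂ) / N) • outer psiPlus + (1 - (2 : ℂ) / N) • outer vac2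

theorem outer_psiPlus_apply (a b : Fin 2 × Fin 2) :
    outer psiPlus a b =
      if hammingNorm ![a.1, a.2] = 1 ∧ hammingNorm ![b.1, b.2] = 1 then 1 / 2 else 0 := by
  have hsq : (((Real.sqrt 2)⁻¹ : ℝ) : ℂ) * star (((Real.sqrt 2)⁻¹ : ℝ) : ℂ) = 1 / 2 := by
    rw [Complex.star_def, Complex.conj_ofReal, ← Complex.ofReal_mul, ← mul_inv,
      Real.mul_self_sqrt zero_le_two]
    norm_num
  simp only [outer, of_apply, psiPlus_eq_ite, apply_ite star, star_zero, mul_ite, ite_mul,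
    zero_mul, mul_zero, hsq, ← ite_and]
  simp_rw [and_comm]

theorem outer_vac2_apply (a b : Fin 2 × Fin 2) :
    outer vac2 a b =
      if hammingNorm ![a.1, a.2] = 0 ∧ hammingNorm ![b.1, b.2] = 0 then 1 else 0 := by
  simp only [outer, of_apply, vac2_eq_ite, apply_ite star, star_zero, star_one, mul_ite,
    mul_zero, mul_one, ← ite_and]
  simp_rw [and_comm]

theorem reducedW_eq_wPairState {M N : ℕ} (e : Fin 2 ⊕ Fin M ≃ Fin N) :
    (Matrix.of fun a b : Fin 2 × Fin 2 =>
        ∑ z : Fin M → Fin 2,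
          Wvec N (fun i => Sum.elim ![a.1, a.2] z (e.symm i)) *
            star (Wvec N (fun i => Sum.elim ![b.1, b.2] z (e.symm i)))) = wPairState N := by
  obtain rfl : N = M + 2 := by simpa [add_comm] using (Fintype.card_congr e).symm
  ext a b
  simp only [of_apply, sum_Wvec_mul_star_Wvec, card_hammingNorm_add_eq_one_and, wPairState,
    Matrix.add_apply, Matrix.smul_apply, outer_psiPlus_apply, outer_vac2_apply, Fintype.card_fin,
    smul_eq_mul]
  split_ifs <;> first | omega | (push_cast; field_simp; ring)

open scoped Kronecker

section PartialTranspose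

variable {α β : Type*}

def partialTranspose {R : Type*} [Semiring R] :
    Matrix (α × β) (α × β) R →ₗ[R] Matrix (α × β) (α × β) R where
  toFun ρ := of fun x y => ρ (x.1, y.2) (y.1, x.2)
  map_add' _ _ := rfl
  map_smul' _ _ := rfl

@[simp]
theorem partialTranspose_apply {R : Type*} [Semiring R] (ρ : Matrix (α × β) (α × β) R)
    (x y : α × β) : partialTranspose ρ x y = ρ (x.1, y.2) (y.1, x.2) :=
  rfl

theorem partialTranspose_kronecker {R : Type*} [CommSemiring R] (A : Matrix α α R)
    (B : Matrix β β R) : partialTranspose (A ⊗ₖ B) = A ⊗ₖ Bᵀ :=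
  rfl

def IsSeparableState (ρ : Matrix (α × β) (α × β) ℂ) : Prop :=
  ∃ (m : ℕ) (p : Fin m → ℝ) (A : Fin m → Matrix α α ℂ) (B : Fin m → Matrix β β ℂ),
    (∀ i, 0 ≤ p i) ∧ (∑ i, p i = 1) ∧ (∀ i, (A i).PosSemidef) ∧ (∀ i, (B i).PosSemidef) ∧
      ρ = ∑ i, (p i : ℂ) • A i ⊗ₖ B i

theorem IsSeparableState.posSemidef_partialTranspose [Fintype α] [Fintype β]
    {ρ : Matrix (α × β) (α × β) ℂ} (h : IsSeparableState ρ) :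
    (partialTranspose ρ).PosSemidef := by
  obtain ⟨m, p, A, B, hp, -, hA, hB, rfl⟩ := h
  rw [map_sum]
  refine posSemidef_sum _ fun i _ => ?_
  rw [map_smul, partialTranspose_kronecker]
  exact ((hA i).kronecker (hB i).transpose).smul (Complex.zero_le_real.mpr (hp i))

end PartialTranspose

theorem submatrix_partialTranspose_wPairState (N : ℕ) :
    (partialTranspose (wPairState N)).submatrix ![(0, 0), (1, 1)] ![(0, 0), (1, 1)] =
      !![1 - 2 / (N : ℂ), 1 / N; 1 / N, 0] := by
  ext i j
  fin_cases i <;> fin_cases j <;>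
    simp [wPairState, outer_psiPlus_apply, outer_vac2_apply, hammingNorm, card_filter] <;> ring

theorem not_posSemidef_partialTranspose_wPairState {N : ℕ} (hN : N ≠ 0) :
    ¬ (partialTranspose (wPairState N)).PosSemidef := by
  intro h
  have hdet := (h.submatrix ![(0, 0), (1, 1)]).det_nonneg
  have hminor :
      det !![1 - 2 / (N : ℂ), 1 / N; 1 / N, 0] = ((-(1 / (N : ℝ) ^ 2) : ℝ) : ℂ) := by
    rw [det_fin_two_of]
    push_cast
    ring
  rw [submatrix_partialTranspose_wPairState, hminor, Complex.zero_le_real, neg_nonneg] at hdet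
  have hN' : (0 : ℝ) < N := by exact_mod_cast Nat.pos_of_ne_zero hN
  exact (one_div_pos.mpr (pow_pos hN' 2)).not_ge hdet

theorem stmt6_general (N : ℕ) (e : Fin 2 ⊕ Fin (N - 2) ≃ Fin N) :
    (Matrix.of fun a b : Fin 2 × Fin 2 =>
        ∑ z : Fin (N - 2) → Fin 2,
          Wvec N (fun i => Sum.elim ![a.1, a.2] z (e.symm i)) *
            star (Wvec N (fun i => Sum.elim ![b.1, b.2] z (e.symm i))))
      = ((2 : ℂ) / (N : ℂ)) • outer psiPlus + (1 - (2 : ℂ) / (N : ℂ)) • outer vac2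
    ∧ ¬ ∃ (m : ℕ) (p : Fin m → ℝ) (A B : Fin m → Matrix (Fin 2) (Fin 2) ℂ),
        (∀ i, 0 ≤ p i) ∧ (∑ i, p i = 1) ∧
        (∀ i, (A i).PosSemidef) ∧ (∀ i, (B i).PosSemidef) ∧
        ((2 : ℂ) / (N : ℂ)) • outer psiPlus + (1 - (2 : ℂ) / (N : ℂ)) • outer vac2
          = ∑ i, ((p i : ℂ)) • kron2 (A i) (B i) := by
  have hN : N ≠ 0 := by
    have := Fintype.card_congr e
    simp only [Fintype.card_sum, Fintype.card_fin] at this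
    omega
  exact ⟨reducedW_eq_wPairState e, fun hsep => not_posSemidef_partialTranspose_wPairState hN
    (IsSeparableState.posSemidef_partialTranspose hsep)⟩

/-- The two-qubit reduced state of `|W_N⟩` (keeping the qubits selected by `e`)
equals `(2/N)|ψ⁺⟩⟨ψ⁺| + (1-2/N)|00⟩⟨00|`, and this state is entangled (not separable)
for every `N ≥ 2`. -/
theorem stmt6 (N : ℕ) (hN : 2 ≤ N) (e : Fin 2 ⊕ Fin (N - 2) ≃ Fin N) :
    (Matrix.of fun a b : Fin 2 × Fin 2 =>
        ∑ z : Fin (N - 2) → Fin 2,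
          Wvec N (fun i => Sum.elim ![a.1, a.2] z (e.symm i)) *
            star (Wvec N (fun i => Sum.elim ![b.1, b.2] z (e.symm i))))
      = ((2 : ℂ) / (N : ℂ)) • outer psiPlus + (1 - (2 : ℂ) / (N : ℂ)) • outer vac2
    ∧ ¬ ∃ (m : ℕ) (p : Fin m → ℝ) (A B : Fin m → Matrix (Fin 2) (Fin 2) ℂ),
        (∀ i, 0 ≤ p i) ∧ (∑ i, p i = 1) ∧
        (∀ i, (A i).PosSemidef) ∧ (∀ i, (B i).PosSemidef) ∧
        ((2 : ℂ) / (N : ℂ)) • outer psiPlus + (1 - (2 : ℂ) / (N : ℂ)) • outer vac2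
          = ∑ i, ((p i : ℂ)) • kron2 (A i) (B i) :=
  stmt6_general N e
end

section
/- If K_k = K_{k_1} ⊗ ... ⊗ K_{k_n} with K_0 = diag(1, √(1-p)), K_1 = √p|0⟩⟨1|, and k is a string of Hamming weight exactly 1, then K_k |W_n⟩⟨W_n| K_k^† = (p/n) |0^{⊗n}⟩⟨0^{⊗n}|. -/
open Matrix

def vac (n : ℕ) : (Fin n → Fin 2) → ℂ := fun x =>
  if x = (fun _ => 0) then 1 else 0

/-- The amplitude damping Kraus operators `K_0 = diag(1, √(1-p))`, `K_1 = √p |0⟩⟨1|`. -/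
noncomputable def Kr (p : ℝ) : Fin 2 → Matrix (Fin 2) (Fin 2) ℂ := fun i =>
  if i = 0 then !![1, 0; 0, (Real.sqrt (1 - p) : ℂ)]
  else !![0, (Real.sqrt p : ℂ); 0, 0]

/-!
Write `k = e_j` for the string with its single `1` at site `j`. Since `K_1|0⟩ = 0`, the column
`e_i` of `K_k` vanishes unless `i = j`, so `K_k|W_n⟩ = n^{-1/2} K_k|e_j⟩`. Each factor of that
column is supported on `|0⟩`, with entries `1` (for `K_0`) and `√p` (for `K_1`), so
`K_k|W_n⟩ = √(p/n) |0…0⟩`. Conjugating the rank-one projector then gives the factor `p/n`.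
-/

lemma outer_eq_vecMulVec {ι : Type*} (v : ι → ℂ) : outer v = vecMulVec v (star v) := rfl

lemma mul_outer_mul_conjTranspose {ι κ : Type*} [Fintype ι] (M : Matrix κ ι ℂ) (v : ι → ℂ) :
    M * outer v * Mᴴ = outer (M *ᵥ v) := by
  rw [outer_eq_vecMulVec, outer_eq_vecMulVec, mul_vecMulVec, vecMulVec_mul, star_mulVec]

lemma outer_smul {ι : Type*} (c : ℂ) (v : ι → ℂ) : outer (c • v) = (c * star c) • outer v := by
  rw [outer_eq_vecMulVec, outer_eq_vecMulVec, star_smul, smul_vecMulVec, vecMulVec_smul, smul_smul,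
    mul_comm]

lemma exists_eq_single_of_card_filter_eq_one {n : ℕ} {y : Fin n → Fin 2}
    (h : (Finset.univ.filter fun l => y l = 1).card = 1) : ∃ j, y = Pi.single j 1 := by
  obtain ⟨j, hj⟩ := Finset.card_eq_one.mp h
  refine ⟨j, funext fun l => ?_⟩
  have hl : y l = 1 ↔ l = j := by simpa using Finset.ext_iff.mp hj l
  rcases eq_or_ne l j with rfl | hne
  · simp [hl.mpr rfl]
  · have : y l ≠ 1 := fun h => hne (hl.mp h)
    simp only [Pi.single_apply, hne, if_false]
    omega

lemma Wvec_single (n : ℕ) (j : Fin n) : Wvec n (Pi.single j 1) = ((Real.sqrt n)⁻¹ : ℝ) := by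
  have : (Finset.univ.filter fun l => (Pi.single j 1 : Fin n → Fin 2) l = 1) = {j} := by
    ext l; simp [Pi.single_apply]
  simp [Wvec, this]

lemma Kr_apply_self (p : ℝ) (c a : Fin 2) : Kr p c a c = if a = 0 then Kr p c 0 c else 0 := by
  fin_cases c <;> fin_cases a <;> simp [Kr]

lemma Kr_one_apply_zero (p : ℝ) (a : Fin 2) : Kr p 1 a 0 = 0 := by
  fin_cases a <;> simp [Kr]

lemma tensOp_Kr_apply_self {m : ℕ} (p : ℝ) (k x : Fin m → Fin 2) :
    tensOp (fun l => Kr p (k l)) x k = if x = 0 then ∏ l, Kr p (k l) 0 (k l) else 0 := by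
  simp only [tensOp, of_apply]
  rw [Finset.prod_congr rfl fun l _ => Kr_apply_self p (k l) (x l), Fintype.prod_ite_zero]
  simp [funext_iff]

lemma prod_Kr_single_apply_zero {m : ℕ} (p : ℝ) (j : Fin m) :
    ∏ l, Kr p ((Pi.single j 1 : Fin m → Fin 2) l) 0 ((Pi.single j 1 : Fin m → Fin 2) l)
      = (Real.sqrt p : ℂ) := by
  rw [Fintype.prod_eq_single j fun l hl => by simp [hl, Kr]]
  simp [Kr]

lemma tensOp_Kr_single_mulVec_Wvec (n : ℕ) (p : ℝ) (j : Fin n) :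
    tensOp (fun l => Kr p ((Pi.single j 1 : Fin n → Fin 2) l)) *ᵥ Wvec n
      = ((Real.sqrt p / Real.sqrt n : ℝ) : ℂ) • vac n := by
  funext x
  rw [mulVec, dotProduct, Finset.sum_eq_single (Pi.single j 1)]
  · rw [tensOp_Kr_apply_self, prod_Kr_single_apply_zero, Wvec_single]
    by_cases hx : x = 0 <;> simp [vac, hx, div_eq_mul_inv, ← Pi.zero_def]
  · intro y _ hy
    by_cases hw : (Finset.univ.filter fun l => y l = 1).card = 1
    · obtain ⟨i, rfl⟩ := exists_eq_single_of_card_filter_eq_one hw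
      have hji : j ≠ i := by rintro rfl; exact hy rfl
      refine mul_eq_zero_of_left (Finset.prod_eq_zero (Finset.mem_univ j) ?_) _
      simp [hji, Kr_one_apply_zero]
    · simp [Wvec, hw]
  · simp

theorem stmt10_general (n : ℕ) (p : ℝ) (hp0 : 0 ≤ p)
    (k : Fin n → Fin 2)
    (hk : (Finset.univ.filter fun l => k l = 1).card = 1) :
    (tensOp fun l => Kr p (k l)) * outer (Wvec n) * (tensOp fun l => Kr p (k l))ᴴ
      = (((p : ℝ) : ℂ) / (n : ℂ)) • outer (vac n) := by
  obtain ⟨j, rfl⟩ := exists_eq_single_of_card_filter_eq_one hk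
  rw [mul_outer_mul_conjTranspose, tensOp_Kr_single_mulVec_Wvec, outer_smul, Complex.star_def,
    Complex.conj_ofReal, ← Complex.ofReal_mul, div_mul_div_comm, Real.mul_self_sqrt hp0,
    Real.mul_self_sqrt n.cast_nonneg]
  push_cast
  rfl

/-- If the Kraus index string `k` has Hamming weight exactly 1, then
`K_k |W_n⟩⟨W_n| K_k† = (p/n)|0…0⟩⟨0…0|`. -/
theorem stmt10 (n : ℕ) (p : ℝ) (hp0 : 0 ≤ p) (hp1 : p ≤ 1)
    (k : Fin n → Fin 2)
    (hk : (Finset.univ.filter fun l => k l = 1).card = 1) :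
    (tensOp fun l => Kr p (k l)) * outer (Wvec n) * (tensOp fun l => Kr p (k l))ᴴ
      = (((p : ℝ) : ℂ) / (n : ℂ)) • outer (vac n) :=
  stmt10_general n p hp0 k hk
end

section
/- For the state ρ(n,p) = (1-p)|W_n⟩⟨W_n| + p|0^{⊗n}⟩⟨0^{⊗n}| with all n parties measuring Pauli Z as setting 1 and Pauli X as setting 2, the symmetrized correlator S^o_r (summed over all n! orderings, where o parties measure nontrivially and r of them use setting 1) equals (1-p)P^o_r + pQ^o_r with Q^o_r = n!·δ_{o,r} and P^o_r = (n-1)!·((n-2r)δ_{o,r} + 2δ_{o,r+2}). -/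
open Matrix

/-- Pauli `Z`. -/
def Zp : Matrix (Fin 2) (Fin 2) ℂ := !![1, 0; 0, -1]

/-- Pauli `X`. -/
def Xp : Matrix (Fin 2) (Fin 2) ℂ := !![0, 1; 1, 0]

/-- The three measurement choices: `M_0 = I`, `M_1 = Z`, `M_2 = X`. -/
def Mset : Fin 3 → Matrix (Fin 2) (Fin 2) ℂ := ![1, Zp, Xp]

/-!
Each ordering σ only relabels the parties, so every summand equals the correlator of the
assignment in which `r` parties measure `Z`, `o - r` measure `X` and the rest measure `I`.
An entry `⟨x| M_{f 1} ⊗ ⋯ ⊗ M_{f n} |y⟩` is `±1` when `x` and `y` differ exactly at the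
`X`-positions, and `0` otherwise. Hence the vacuum contributes `δ_{o,r}`, while in
`⟨W|⋯|W⟩ = n⁻¹ ∑_{i,j} ⟨e_j|⋯|e_i⟩` the diagonal terms give `n - 2r` when nobody measures `X`,
and the off-diagonal ones give the two ordered pairs `(i, j)` whose positions are the `X`'s
when exactly two parties measure `X`.
-/

open Finset

lemma Mset_apply (k : Fin 3) (a b : Fin 2) :
    Mset k a b = if (a ≠ b ↔ k = 2) then (if k = 1 ∧ a = 1 then -1 else 1) else 0 := by
  fin_cases k <;> fin_cases a <;> fin_cases b <;> simp [Mset, Zp, Xp]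

lemma trace_outer_mul {ι : Type*} [Fintype ι] (v : ι → ℂ) (A : Matrix ι ι ℂ) :
    (outer v * A).trace = ∑ x, ∑ y, v x * star (v y) * A y x := by
  simp [Matrix.trace, Matrix.mul_apply, outer]

lemma filter_eq_singleton_iff_eq_single {ι : Type*} [Fintype ι] [DecidableEq ι]
    (x : ι → Fin 2) (a : ι) : ({l | x l = 1} : Finset ι) = {a} ↔ x = Pi.single a 1 := by
  simp only [Finset.ext_iff, mem_filter, mem_univ, true_and, mem_singleton, funext_iff,
    Pi.single_apply]
  refine forall_congr' fun l => ?_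
  split_ifs with h <;> generalize x l = v <;> fin_cases v <;> simp [h]

lemma card_filter_eq_pair {α : Type*} [Fintype α] [DecidableEq α] (s : Finset α) :
    #{q : α × α | q.1 ≠ q.2 ∧ s = ({q.1, q.2} : Finset α)} = if #s = 2 then 2 else 0 := by
  split_ifs with hs
  · obtain ⟨a, b, hab, rfl⟩ := card_eq_two.mp hs
    have hpairs : ({q : α × α | q.1 ≠ q.2 ∧ ({a, b} : Finset α) = {q.1, q.2}} : Finset (α × α)) =
        {(a, b), (b, a)} := by
      ext ⟨i, j⟩
      simp only [mem_filter, mem_univ, true_and, mem_insert, mem_singleton, Prod.mk.injEq]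
      constructor
      · rintro ⟨-, h⟩
        have h' : ({a, b} : Set α) = {i, j} := by
          simpa using congrArg ((↑) : Finset α → Set α) h
        rcases Set.pair_eq_pair_iff.mp h' with ⟨rfl, rfl⟩ | ⟨rfl, rfl⟩ <;> simp
      · rintro (⟨rfl, rfl⟩ | ⟨rfl, rfl⟩)
        · exact ⟨hab, rfl⟩
        · exact ⟨hab.symm, pair_comm _ _⟩
    rw [hpairs, card_pair (by simp [hab])]
  · rw [card_eq_zero, filter_eq_empty_iff]
    rintro ⟨i, j⟩ - ⟨hij, rfl⟩
    exact hs (card_pair hij)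

lemma card_filter_perm_symm {α : Type*} [Fintype α] (σ : Equiv.Perm α)
    (p : α → Prop) [DecidablePred p] : #{l | p (σ.symm l)} = #{m | p m} :=
  card_equiv σ.symm (by simp)

section Correlators

variable {n : ℕ}

lemma tensOp_Mset_apply (f : Fin n → Fin 3) (x y : Fin n → Fin 2) :
    tensOp (fun l => Mset (f l)) x y =
      if ∀ l, (x l ≠ y l ↔ f l = 2) then (-1) ^ #{l | f l = 1 ∧ x l = 1} else 0 := by
  simp only [tensOp, of_apply, Mset_apply, Fintype.prod_ite_zero]
  rw [prod_ite, prod_const, prod_const_one, mul_one]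
  congr

lemma tensOp_Mset_single_single (f : Fin n → Fin 3) (i j : Fin n) :
    tensOp (fun l => Mset (f l)) (Pi.single j 1) (Pi.single i 1) =
      (if i = j then (if #{l | f l = 2} = 0 then (if f i = 1 then -1 else 1) else 0) else 0) +
        if i ≠ j ∧ ({l | f l = 2} : Finset (Fin n)) = {i, j} then 1 else 0 := by
  rw [tensOp_Mset_apply]
  by_cases hij : i = j
  · subst hij
    have hsign : #{l | f l = 1 ∧ (Pi.single i 1 : Fin n → Fin 2) l = 1} =
        if f i = 1 then 1 else 0 := by
      by_cases hfi : f i = 1 <;> simp [Pi.single_apply, filter_and, filter_eq', hfi]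
    rw [hsign]
    simp [card_eq_zero, filter_eq_empty_iff]
  · have hsupport : (∀ l, ((Pi.single j 1 : Fin n → Fin 2) l ≠ (Pi.single i 1 : Fin n → Fin 2) l
        ↔ f l = 2)) ↔ ({l | f l = 2} : Finset (Fin n)) = {i, j} := by
      simp only [Finset.ext_iff, mem_filter, mem_univ, true_and, mem_insert, mem_singleton,
        Pi.single_apply]
      refine forall_congr' fun l => ?_
      by_cases hli : l = i <;> by_cases hlj : l = j <;> simp_all [eq_comm]
    simp only [hij, if_false, zero_add, ne_eq, not_false_eq_true, true_and, hsupport]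
    split_ifs with h
    · have hfj : f j = 2 := by simpa using Finset.ext_iff.mp h j
      have hsign : #{l | f l = 1 ∧ (Pi.single j 1 : Fin n → Fin 2) l = 1} = 0 := by
        refine card_eq_zero.mpr (filter_eq_empty_iff.mpr fun l _ hl => ?_)
        obtain rfl : l = j := by simpa [Pi.single_apply] using hl.2
        simp_all
      rw [hsign, pow_zero]
    · rfl

lemma sum_Wvec_mul (g : (Fin n → Fin 2) → ℂ) :
    ∑ x, Wvec n x * g x = (((Real.sqrt n)⁻¹ : ℝ) : ℂ) * ∑ i, g (Pi.single i 1) := by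
  have hsupp : ({x | #{l | x l = 1} = 1} : Finset (Fin n → Fin 2)) =
      univ.image fun i => Pi.single i 1 := by
    ext x
    simp only [mem_filter, mem_univ, true_and, mem_image, card_eq_one,
      filter_eq_singleton_iff_eq_single]
    exact exists_congr fun a => eq_comm
  have hinj : Function.Injective fun i : Fin n => (Pi.single i 1 : Fin n → Fin 2) := by
    intro i j h
    simpa [Pi.single_apply, eq_comm] using congrFun h i
  simp only [Wvec, ite_mul, zero_mul]
  rw [← sum_filter, hsupp, sum_image fun i _ j _ h => hinj h, mul_sum]

lemma star_Wvec (x : Fin n → Fin 2) : star (Wvec n x) = Wvec n x := by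
  unfold Wvec; split_ifs <;> simp [Complex.conj_ofReal]

lemma trace_outer_Wvec_mul (A : Matrix (Fin n → Fin 2) (Fin n → Fin 2) ℂ) :
    (outer (Wvec n) * A).trace = (n : ℂ)⁻¹ * ∑ i, ∑ j, A (Pi.single j 1) (Pi.single i 1) := by
  have hnorm : ((((Real.sqrt n)⁻¹ : ℝ) : ℂ)) * (((Real.sqrt n)⁻¹ : ℝ) : ℂ) = (n : ℂ)⁻¹ := by
    rw [← Complex.ofReal_mul, ← mul_inv, Real.mul_self_sqrt n.cast_nonneg]
    push_cast; rfl
  simp only [trace_outer_mul, star_Wvec, mul_assoc, ← mul_sum, sum_Wvec_mul]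
  rw [← mul_assoc, hnorm]

lemma trace_outer_vac_mul (A : Matrix (Fin n → Fin 2) (Fin n → Fin 2) ℂ) :
    (outer (vac n) * A).trace = A 0 0 := by
  simp [trace_outer_mul, vac, apply_ite (star : ℂ → ℂ)]
  rfl

lemma sum_ite_eq_one_neg_one (f : Fin n → Fin 3) :
    ∑ i, (if f i = 1 then (-1 : ℂ) else 1) = n - 2 * #{l | f l = 1} := by
  have h : ∀ i, (if f i = 1 then (-1 : ℂ) else 1) = 1 - 2 * if f i = 1 then 1 else 0 := by
    intro i; split_ifs <;> ring
  simp only [h, sum_sub_distrib, ← mul_sum, sum_boole, sum_const, card_univ, Fintype.card_fin,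
    nsmul_one]

lemma trace_outer_Wvec_mul_tensOp_Mset (f : Fin n → Fin 3) :
    (outer (Wvec n) * tensOp (fun l => Mset (f l))).trace = (n : ℂ)⁻¹ *
      ((if #{l | f l = 2} = 0 then (n : ℂ) - 2 * #{l | f l = 1} else 0) +
        if #{l | f l = 2} = 2 then 2 else 0) := by
  rw [trace_outer_Wvec_mul]
  congr 1
  simp only [tensOp_Mset_single_single, sum_add_distrib, sum_ite_eq, mem_univ, if_true]
  rw [← Fintype.sum_prod_type' (f := fun i j => if i ≠ j ∧ _ then _ else _), sum_boole,
    card_filter_eq_pair]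
  congr 1
  · split_ifs <;> simp [sum_ite_eq_one_neg_one]
  · split_ifs <;> simp

lemma trace_outer_vac_mul_tensOp_Mset (f : Fin n → Fin 3) :
    (outer (vac n) * tensOp (fun l => Mset (f l))).trace =
      if #{l | f l = 2} = 0 then 1 else 0 := by
  rw [trace_outer_vac_mul, tensOp_Mset_apply]
  simp [card_eq_zero, filter_eq_empty_iff]

lemma trace_mixture_mul_tensOp_Mset (a b : ℂ) (f : Fin n → Fin 3) :
    ((a • outer (Wvec n) + b • outer (vac n)) * tensOp (fun l => Mset (f l))).trace =
      a * ((n : ℂ)⁻¹ * ((if #{l | f l = 2} = 0 then (n : ℂ) - 2 * #{l | f l = 1} else 0) +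
        if #{l | f l = 2} = 2 then 2 else 0)) + b * if #{l | f l = 2} = 0 then 1 else 0 := by
  rw [Matrix.add_mul, smul_mul, smul_mul, trace_add, trace_smul, trace_smul, smul_eq_mul,
    smul_eq_mul, trace_outer_Wvec_mul_tensOp_Mset, trace_outer_vac_mul_tensOp_Mset]

end Correlators

def orderedSetting (r o : ℕ) {n : ℕ} (k : Fin n) : Fin 3 :=
  if (k : ℕ) < r then 1 else if (k : ℕ) < o then 2 else 0

lemma card_orderedSetting_eq_one {n r : ℕ} (o : ℕ) (hrn : r ≤ n) :
    #{k : Fin n | orderedSetting r o k = 1} = r := by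
  have h : ∀ k : Fin n, orderedSetting r o k = 1 ↔ (k : ℕ) < r := by
    intro k; unfold orderedSetting; split_ifs <;> simp_all
  simp only [h, Fin.card_filter_val_lt]
  omega

lemma card_orderedSetting_eq_two {n r o : ℕ} (hro : r ≤ o) (hon : o ≤ n) :
    #{k : Fin n | orderedSetting r o k = 2} = o - r := by
  have h : ∀ k : Fin n, orderedSetting r o k = 2 ↔ (k : ℕ) < o ∧ ¬ (k : ℕ) < r := by
    intro k; unfold orderedSetting; split_ifs <;> simp_all
  rw [show ({k | orderedSetting r o k = 2} : Finset (Fin n)) =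
      ({k : Fin n | (k : ℕ) < o} : Finset (Fin n)) \ ({k : Fin n | (k : ℕ) < r} : Finset (Fin n))
      by ext; simp [h],
    card_sdiff_of_subset fun k => by simp only [mem_filter, mem_univ, true_and]; omega,
    Fin.card_filter_val_lt, Fin.card_filter_val_lt]
  omega

theorem stmt13_general (n o r : ℕ) (ho1 : 1 ≤ o) (hon : o ≤ n) (hro : r ≤ o)
    (p : ℝ) :
    ∑ σ : Equiv.Perm (Fin n),
        (((((1 - p : ℝ)) : ℂ) • outer (Wvec n) + ((p : ℝ) : ℂ) • outer (vac n)) *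
          tensOp (fun l : Fin n =>
            Mset (if ((σ.symm l : Fin n) : ℕ) < r then 1
              else if ((σ.symm l : Fin n) : ℕ) < o then 2 else 0))).trace
      = (((1 - p) * (((n - 1).factorial : ℝ) *
            (((n : ℝ) - 2 * r) * (if o = r then 1 else 0) +
              2 * (if o = r + 2 then 1 else 0)))
          + p * ((n.factorial : ℝ) * (if o = r then 1 else 0)) : ℝ) : ℂ) := by
  have hn : n ≠ 0 := by omega
  calc _ = ∑ _σ : Equiv.Perm (Fin n), (((1 - p : ℝ) : ℂ) * ((n : ℂ)⁻¹ *
        ((if o - r = 0 then (n : ℂ) - 2 * r else 0) + if o - r = 2 then 2 else 0)) +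
          ((p : ℝ) : ℂ) * if o - r = 0 then 1 else 0) :=
        sum_congr rfl fun σ _ => by
          refine (trace_mixture_mul_tensOp_Mset _ _ fun l => orderedSetting r o (σ.symm l)).trans ?_
          rw [card_filter_perm_symm σ (orderedSetting r o · = 1),
            card_filter_perm_symm σ (orderedSetting r o · = 2),
            card_orderedSetting_eq_one o (hro.trans hon), card_orderedSetting_eq_two hro hon]
    _ = _ := by
      rw [sum_const, card_univ, Fintype.card_perm, Fintype.card_fin, nsmul_eq_mul,
        ← Nat.mul_factorial_pred hn]
      push_cast
      split_ifs <;> first | omega | (field_simp; push_cast; ring)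

/-- For the state `ρ(n,p) = (1-p)|W_n⟩⟨W_n| + p|0…0⟩⟨0…0|` with all parties measuring
`Z` (setting 1) and `X` (setting 2), the symmetrized correlator `S^o_r`
(sum over all `n!` orderings, `o` parties measuring nontrivially, `r` of them using
setting 1) equals `(1-p)P^o_r + pQ^o_r` with `Q^o_r = n!δ_{o,r}` and
`P^o_r = (n-1)!((n-2r)δ_{o,r} + 2δ_{o,r+2})`. -/
theorem stmt13 (n o r : ℕ) (ho1 : 1 ≤ o) (hon : o ≤ n) (hro : r ≤ o)
    (p : ℝ) (hp0 : 0 ≤ p) (hp1 : p ≤ 1) :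
    ∑ σ : Equiv.Perm (Fin n),
        (((((1 - p : ℝ)) : ℂ) • outer (Wvec n) + ((p : ℝ) : ℂ) • outer (vac n)) *
          tensOp (fun l : Fin n =>
            Mset (if ((σ.symm l : Fin n) : ℕ) < r then 1
              else if ((σ.symm l : Fin n) : ℕ) < o then 2 else 0))).trace
      = (((1 - p) * (((n - 1).factorial : ℝ) *
            (((n : ℝ) - 2 * r) * (if o = r then 1 else 0) +
              2 * (if o = r + 2 then 1 else 0)))
          + p * ((n.factorial : ℝ) * (if o = r then 1 else 0)) : ℝ) : ℂ) :=
  stmt13_general n o r ho1 hon hro p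
end

section
/- For the n-qubit W state, ⟨W_n| X ⊗ X ⊗ Z^{⊗(o-2)} ⊗ I^{⊗(n-o)} |W_n⟩ = 2/n for 2 ≤ o ≤ n, where X = |0⟩⟨1| + |1⟩⟨0| and Z = |0⟩⟨0| - |1⟩⟨1|. -/
open Matrix

/-!
Writing `|W_n⟩ = n^{-1/2} ∑ᵢ |eᵢ⟩` with `eᵢ` the basis state whose only `1` is at site `i`, the
expectation of any operator `A` is `n⁻¹ ∑ᵢⱼ ⟨eᵢ|A|eⱼ⟩`. For a product operator the entry
`⟨eᵢ|A|eⱼ⟩` is a product of one-site entries; an `X` factor vanishes wherever `eᵢ` and `eⱼ` agree,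
so the two `X` sites force `{i, j} = {0, 1}`, and then every other factor is the `(0,0)` entry of
`Z` or `I`, which is `1`. The double sum is therefore `2`.
-/

open Finset

namespace WState

variable {ι : Type*} [DecidableEq ι] {n : ℕ}

lemma single_one_injective : Function.Injective fun i : ι => (Pi.single i 1 : ι → Fin 2) := by
  intro i j h
  simpa [Pi.single_apply] using congrFun h i

lemma card_filter_eq_one_iff [Fintype ι] (x : ι → Fin 2) :
    #{i | x i = 1} = 1 ↔ ∃ i, x = Pi.single i 1 := by
  constructor
  · intro h
    obtain ⟨i, hi⟩ := card_eq_one.mp h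
    have hx : ∀ l, x l = 1 ↔ l = i := fun l => by
      simpa using Finset.ext_iff.mp hi l
    refine ⟨i, funext fun l => ?_⟩
    by_cases hl : l = i
    · simp [hl, (hx i).mpr rfl]
    · have : x l ≠ 1 := fun h => hl ((hx l).mp h)
      simp only [Pi.single_apply, hl, if_false]
      omega
  · rintro ⟨i, rfl⟩
    exact card_eq_one.mpr ⟨i, by ext l; simp [Pi.single_apply]⟩

lemma sum_Wvec_mul (f : (Fin n → Fin 2) → ℂ) :
    ∑ x, Wvec n x * f x = (((√n)⁻¹ : ℝ) : ℂ) * ∑ i, f (Pi.single i 1) := by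
  let single : Fin n ↪ (Fin n → Fin 2) := ⟨fun i => Pi.single i 1, single_one_injective⟩
  have hsupp : ({x | #{i | x i = 1} = 1} : Finset (Fin n → Fin 2)) = univ.map single := by
    ext x
    simp only [mem_filter, mem_univ, true_and, mem_map, card_filter_eq_one_iff]
    exact exists_congr fun i => eq_comm
  simp only [Wvec, ite_mul, zero_mul]
  rw [← sum_filter, hsupp, sum_map, mul_sum]
  rfl

lemma star_Wvec : star (Wvec n) = Wvec n := by
  funext x
  simp [Wvec, apply_ite (star : ℂ → ℂ), Complex.conj_ofReal]

lemma star_Wvec_dotProduct_mulVec (A : Matrix (Fin n → Fin 2) (Fin n → Fin 2) ℂ) :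
    star (Wvec n) ⬝ᵥ A *ᵥ Wvec n =
      (((n : ℝ)⁻¹ : ℝ) : ℂ) * ∑ i, ∑ j, A (Pi.single i 1) (Pi.single j 1) := by
  have hrow : ∀ x, (A *ᵥ Wvec n) x =
      (((√n)⁻¹ : ℝ) : ℂ) * ∑ j, A x (Pi.single j 1) := fun x => by
    simp only [mulVec, dotProduct, mul_comm (A x _), sum_Wvec_mul]
  have hsq : (((√n)⁻¹ : ℝ) : ℂ) * (((√n)⁻¹ : ℝ) : ℂ) = (((n : ℝ)⁻¹ : ℝ) : ℂ) := by
    rw [← Complex.ofReal_mul, ← mul_inv, Real.mul_self_sqrt n.cast_nonneg]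
  rw [star_Wvec, dotProduct, sum_Wvec_mul]
  simp only [hrow, ← mul_sum, ← mul_assoc, hsq]

section TwoSiteX

variable {M : Fin n → Matrix (Fin 2) (Fin 2) ℂ} {a b : Fin n}

lemma tensOp_single_single_eq_one (hab : a ≠ b) (ha : M a = Xp) (hb : M b = Xp)
    (hM : ∀ l, l ≠ a → l ≠ b → M l 0 0 = 1) :
    tensOp M (Pi.single a 1) (Pi.single b 1) = 1 := by
  rw [tensOp, of_apply]
  refine prod_eq_one fun l _ => ?_
  by_cases hla : l = a
  · subst hla; simp [hab, ha, Xp]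
  by_cases hlb : l = b
  · subst hlb; simp [Ne.symm hab, hb, Xp]
  simpa [Pi.single_apply, hla, hlb] using hM l hla hlb

lemma tensOp_single_single_eq_zero (hab : a ≠ b) (ha : M a = Xp) (hb : M b = Xp) {i j : Fin n}
    (hij : ¬((i = a ∧ j = b) ∨ (i = b ∧ j = a))) :
    tensOp M (Pi.single i 1) (Pi.single j 1) = 0 := by
  have hXdiag : ∀ k, Xp k k = 0 := fun k => by fin_cases k <;> simp [Xp]
  have hagree : (Pi.single i 1 : Fin n → Fin 2) a = (Pi.single j 1 : Fin n → Fin 2) a ∨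
      (Pi.single i 1 : Fin n → Fin 2) b = (Pi.single j 1 : Fin n → Fin 2) b := by
    by_contra! h
    simp only [Pi.single_apply] at h
    split_ifs at h <;> simp_all
  rcases hagree with h | h
  · exact prod_eq_zero (mem_univ a) (by rw [h, ha, hXdiag])
  · exact prod_eq_zero (mem_univ b) (by rw [h, hb, hXdiag])

lemma sum_sum_tensOp_single_single (hab : a ≠ b) (ha : M a = Xp) (hb : M b = Xp)
    (hM : ∀ l, l ≠ a → l ≠ b → M l 0 0 = 1) :
    ∑ i, ∑ j, tensOp M (Pi.single i 1) (Pi.single j 1) = 2 := by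
  have hentry : ∀ i j, tensOp M (Pi.single i 1) (Pi.single j 1) =
      (if i = a ∧ j = b then 1 else 0) + (if i = b ∧ j = a then 1 else 0) := fun i j => by
    by_cases h₁ : i = a ∧ j = b
    · obtain ⟨rfl, rfl⟩ := h₁
      simp [tensOp_single_single_eq_one hab ha hb hM, hab]
    by_cases h₂ : i = b ∧ j = a
    · obtain ⟨rfl, rfl⟩ := h₂
      simp [tensOp_single_single_eq_one hab.symm hb ha fun l hb ha => hM l ha hb, hab]
    simp [tensOp_single_single_eq_zero hab ha hb (not_or.mpr ⟨h₁, h₂⟩), h₁, h₂]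
  norm_num [hentry, sum_add_distrib, ite_and]

end TwoSiteX

end WState

/-- `⟨W_n| X ⊗ X ⊗ Z^{⊗(o-2)} ⊗ I^{⊗(n-o)} |W_n⟩ = 2/n` for `2 ≤ o ≤ n`. -/
theorem stmt15 (n o : ℕ) (ho2 : 2 ≤ o) (hon : o ≤ n) :
    star (Wvec n) ⬝ᵥ
        (tensOp fun l : Fin n =>
          if (l : ℕ) < 2 then Xp else if (l : ℕ) < o then Zp else 1).mulVec (Wvec n)
      = (((2 : ℝ) / (n : ℝ) : ℝ) : ℂ) := by
  have hn : 2 ≤ n := ho2.trans hon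
  have hdiag : ∀ l : Fin n, 2 ≤ (l : ℕ) →
      (if (l : ℕ) < 2 then Xp else if (l : ℕ) < o then Zp else 1) 0 0 = 1 := fun l hl => by
    rw [if_neg (by omega)]
    split_ifs <;> simp [Zp]
  rw [WState.star_Wvec_dotProduct_mulVec, WState.sum_sum_tensOp_single_single
    (a := ⟨0, by omega⟩) (b := ⟨1, by omega⟩) (by simp) (by simp) (by simp)
    fun l h0 h1 => hdiag l (by simp only [Ne, Fin.ext_iff] at h0 h1; omega)]
  push_cast
  ring
end

section
/- For all even n ≥ 4 and all p with 0 ≤ p < (2n-4)/(5n-2), one has (1-p)·n!·(w_n - (n-2)(n-1)/2) + p·n!·(w_n - n(n+2)/2) > n!·(w_n - (n-2)(n+1)/2), where w_n = n(n-1)(n+2)·2^{n-4}/binomial(n, n/2). -/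
/-! The Bell value `w` cancels from the comparison: the quantum value exceeds the local bound
by exactly `n!/2 · ((2n - 4) - p(5n - 2))`, which is positive precisely below the threshold. -/

lemma mixture_sub_localBound {K : Type*} [Field K] (N F w p : K) :
    (1 - p) * (F * (w - (N - 2) * (N - 1) / 2)) + p * (F * (w - N * (N + 2) / 2))
      - F * (w - (N - 2) * (N + 1) / 2) = F / 2 * ((2 * N - 4) - p * (5 * N - 2)) := by
  ring

theorem stmt18_general (n : ℕ) (hn : 4 ≤ n)
    (w : ℚ)
    (p : ℚ) (hp1 : p < (2 * (n : ℚ) - 4) / (5 * (n : ℚ) - 2)) :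
    (1 - p) * ((n.factorial : ℚ) * (w - ((n : ℚ) - 2) * ((n : ℚ) - 1) / 2))
      + p * ((n.factorial : ℚ) * (w - (n : ℚ) * ((n : ℚ) + 2) / 2))
      > (n.factorial : ℚ) * (w - ((n : ℚ) - 2) * ((n : ℚ) + 1) / 2) := by
  have hn4 : (4 : ℚ) ≤ n := by exact_mod_cast hn
  have hmargin : 0 < (2 * (n : ℚ) - 4) - p * (5 * n - 2) :=
    sub_pos.mpr ((lt_div_iff₀ (by linarith)).mp hp1)
  have hfact : (0 : ℚ) < n.factorial := by exact_mod_cast n.factorial_pos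
  rw [gt_iff_lt, ← sub_pos, mixture_sub_localBound]
  positivity

/-- For even `n ≥ 4` and `0 ≤ p < (2n-4)/(5n-2)`, the quantum value
`(1-p)·n!(w_n-(n-2)(n-1)/2) + p·n!(w_n-n(n+2)/2)` strictly exceeds the local bound
`n!(w_n-(n-2)(n+1)/2)`, where `w_n = n(n-1)(n+2)·2^{n-4}/C(n,n/2)`. -/
theorem stmt18 (n : ℕ) (hev : Even n) (hn : 4 ≤ n)
    (w : ℚ)
    (hw : w = ((n : ℚ) * ((n : ℚ) - 1) * ((n : ℚ) + 2) * (2 : ℚ) ^ (n - 4)) /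
      (n.choose (n / 2) : ℚ))
    (p : ℚ) (hp0 : 0 ≤ p) (hp1 : p < (2 * (n : ℚ) - 4) / (5 * (n : ℚ) - 2)) :
    (1 - p) * ((n.factorial : ℚ) * (w - ((n : ℚ) - 2) * ((n : ℚ) - 1) / 2))
      + p * ((n.factorial : ℚ) * (w - (n : ℚ) * ((n : ℚ) + 2) / 2))
      > (n.factorial : ℚ) * (w - ((n : ℚ) - 2) * ((n : ℚ) + 1) / 2) :=
  stmt18_general n hn w p hp1
end
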